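/- arXiv:1507.06371 — 2 statements merged into one kernel-verified Lean document; each statement's English description precedes it below -/
import Mathlib

section
/- Let F : ℝ^p → ℝ be differentiable and let β̂ be a minimizer of L(β) = F(β) + λ₁ ∑_k w_k |β_k| + λ₂ ∑_k β_k² with λ₂ > 0. If β̂_a · β̂_b > 0, then |β̂_a − β̂_b| ≤ (1/(2λ₂)) · |∂F/∂β_a(β̂) − ∂F/∂β_b(β̂)| + (λ₁/(2λ₂)) · |w_a − w_b|. -/
open scoped BigOperators

/-!
At a nonzero coordinate `c` the objective is differentiable along the axis `e_c`, so minimality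
gives `∂_c F(β̂) + λ₁ w_c sgn β̂_c + 2 λ₂ β̂_c = 0`. When `β̂_a` and `β̂_b` share a sign, subtracting
the two equations cancels the sign factor up to `λ₁ (w_a - w_b)`, and the triangle inequality
gives the bound.
-/

section PenalizedObjective

variable {ι : Type*} [Fintype ι] [DecidableEq ι]

lemma hasDerivAt_sum_apply_add_smul_single (φ : ι → ℝ → ℝ) (x : EuclideanSpace ℝ ι) (c : ι)
    {d : ℝ} (hd : HasDerivAt (φ c) d (x c)) :
    HasDerivAt (fun t : ℝ =>
      ∑ k, φ k ((x + t • EuclideanSpace.single c 1 : EuclideanSpace ℝ ι) k)) d 0 := by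
  have hterm : ∀ k, HasDerivAt (fun t : ℝ =>
      φ k ((x + t • EuclideanSpace.single c 1 : EuclideanSpace ℝ ι) k))
      (if k = c then d else 0) 0 := by
    intro k
    by_cases hk : k = c
    · subst hk
      have hline : HasDerivAt (fun t : ℝ => x k + t) 1 0 := (hasDerivAt_id' 0).const_add _
      simpa [Function.comp_def] using hd.comp_of_eq 0 hline (by simp)
    · simpa [hk, PiLp.single_apply] using hasDerivAt_const (0 : ℝ) (φ k (x k))
  simpa using HasDerivAt.fun_sum (u := Finset.univ) fun k _ => hterm k

noncomputable def penalizedObjective (F : EuclideanSpace ℝ ι → ℝ) (lam1 lam2 : ℝ) (w : ι → ℝ)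
    (β : EuclideanSpace ℝ ι) : ℝ :=
  F β + lam1 * ∑ k, w k * |β k| + lam2 * ∑ k, (β k) ^ 2

lemma fderiv_single_add_eq_zero_of_forall_le {F : EuclideanSpace ℝ ι → ℝ} {β : EuclideanSpace ℝ ι}
    (hF : DifferentiableAt ℝ F β) (lam1 lam2 : ℝ) (w : ι → ℝ)
    (hmin : ∀ γ, penalizedObjective F lam1 lam2 w β ≤ penalizedObjective F lam1 lam2 w γ)
    {c : ι} (hc : β c ≠ 0) :
    fderiv ℝ F β (EuclideanSpace.single c 1) + lam1 * w c * (SignType.sign (β c) : ℝ)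
      + 2 * lam2 * β c = 0 := by
  set e : EuclideanSpace ℝ ι := EuclideanSpace.single c 1
  set g : ℝ → ℝ := fun t => penalizedObjective F lam1 lam2 w (β + t • e)
  have hline : HasDerivAt (fun t : ℝ => β + t • e) e 0 := by
    simpa using ((hasDerivAt_id' (0 : ℝ)).smul_const e).const_add β
  have hF' := hF.hasFDerivAt.comp_hasDerivAt_of_eq 0 hline (by simp)
  have hl1 := hasDerivAt_sum_apply_add_smul_single (fun k y => w k * |y|) β c
    ((hasDerivAt_abs hc).const_mul (w c))
  have hl2 := hasDerivAt_sum_apply_add_smul_single (fun _ y => y ^ 2) β c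
    (by simpa using hasDerivAt_pow 2 (β c))
  have hg : HasDerivAt g (fderiv ℝ F β e + lam1 * (w c * (SignType.sign (β c) : ℝ))
      + lam2 * (2 * β c)) 0 :=
    (hF'.add (hl1.const_mul lam1)).add (hl2.const_mul lam2)
  have hloc : IsLocalMin g 0 :=
    Filter.Eventually.of_forall fun t => by simpa [g] using hmin (β + t • e)
  linear_combination hloc.hasDerivAt_eq_zero hg

end PenalizedObjective

lemma abs_sub_le_of_stationary {Da Db xa xb wa wb s lam1 lam2 : ℝ}
    (hlam1 : 0 ≤ lam1) (hlam2 : 0 < lam2) (hs : |s| ≤ 1)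
    (ha : Da + lam1 * wa * s + 2 * lam2 * xa = 0) (hb : Db + lam1 * wb * s + 2 * lam2 * xb = 0) :
    |xa - xb| ≤ 1 / (2 * lam2) * |Da - Db| + lam1 / (2 * lam2) * |wa - wb| := by
  have hdiff : xa - xb = ((Db - Da) + lam1 * s * (wb - wa)) / (2 * lam2) := by
    field_simp
    linarith
  have hnum : |(Db - Da) + lam1 * s * (wb - wa)| ≤ |Da - Db| + lam1 * |wa - wb| :=
    calc |(Db - Da) + lam1 * s * (wb - wa)|
        ≤ |Db - Da| + lam1 * |s| * |wb - wa| := by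
          simpa [abs_mul, abs_of_nonneg hlam1] using abs_add_le (Db - Da) (lam1 * s * (wb - wa))
      _ ≤ |Da - Db| + lam1 * |wa - wb| := by
          rw [abs_sub_comm Db, abs_sub_comm wb]
          gcongr
          nlinarith [abs_nonneg (wa - wb)]
  rw [hdiff, abs_div, abs_of_pos (by positivity : 0 < 2 * lam2)]
  calc _ ≤ (|Da - Db| + lam1 * |wa - wb|) / (2 * lam2) := by gcongr
    _ = _ := by ring

theorem stmt_1_general {p : ℕ} (F : EuclideanSpace ℝ (Fin p) → ℝ) (hF : Differentiable ℝ F)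
    (lam1 lam2 : ℝ) (hlam1 : 0 ≤ lam1) (hlam2 : 0 < lam2)
    (w : Fin p → ℝ)
    (L : EuclideanSpace ℝ (Fin p) → ℝ)
    (hL : ∀ β, L β = F β + lam1 * ∑ k, w k * |β k| + lam2 * ∑ k, (β k) ^ 2)
    (βhat : EuclideanSpace ℝ (Fin p))
    (hmin : ∀ β, L βhat ≤ L β)
    (a b : Fin p) (hab : βhat a * βhat b > 0) :
    |βhat a - βhat b| ≤
      (1 / (2 * lam2)) * |fderiv ℝ F βhat (EuclideanSpace.single a 1) -
          fderiv ℝ F βhat (EuclideanSpace.single b 1)| +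
        (lam1 / (2 * lam2)) * |w a - w b| := by
  obtain rfl : L = penalizedObjective F lam1 lam2 w := funext hL
  have hsign : SignType.sign (βhat b) = SignType.sign (βhat a) := by
    rcases mul_pos_iff.mp hab with ⟨ha, hb⟩ | ⟨ha, hb⟩
    · rw [sign_pos ha, sign_pos hb]
    · rw [sign_neg ha, sign_neg hb]
  have stationary_at {c : Fin p} (hc : βhat c ≠ 0) :=
    fderiv_single_add_eq_zero_of_forall_le (hF βhat) lam1 lam2 w hmin hc
  have hb := stationary_at (right_ne_zero_of_mul hab.ne')
  rw [hsign] at hb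
  have hs : |(SignType.sign (βhat a) : ℝ)| ≤ 1 := by
    cases SignType.sign (βhat a) <;> simp
  exact abs_sub_le_of_stationary hlam1 hlam2 hs
    (stationary_at (left_ne_zero_of_mul hab.ne')) hb

/-- Grouping-effect bound for two same-sign coordinates of a minimizer of an
elastic-net-type penalized objective. -/
theorem stmt_1 {p : ℕ} (F : EuclideanSpace ℝ (Fin p) → ℝ) (hF : Differentiable ℝ F)
    (lam1 lam2 : ℝ) (hlam1 : 0 ≤ lam1) (hlam2 : 0 < lam2)
    (w : Fin p → ℝ) (hw : ∀ k, 0 ≤ w k)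
    (L : EuclideanSpace ℝ (Fin p) → ℝ)
    (hL : ∀ β, L β = F β + lam1 * ∑ k, w k * |β k| + lam2 * ∑ k, (β k) ^ 2)
    (βhat : EuclideanSpace ℝ (Fin p))
    (hmin : ∀ β, L βhat ≤ L β)
    (a b : Fin p) (hab : βhat a * βhat b > 0) :
    |βhat a - βhat b| ≤
      (1 / (2 * lam2)) * |fderiv ℝ F βhat (EuclideanSpace.single a 1) -
          fderiv ℝ F βhat (EuclideanSpace.single b 1)| +
        (lam1 / (2 * lam2)) * |w a - w b| :=
  stmt_1_general F hF lam1 lam2 hlam1 hlam2 w L hL βhat hmin a b hab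
end

section
/- Let β̂ minimize L(β) = F(β) + λ₁ ∑_k w_k |β_k| + λ₂‖β‖² where F(β) = (1/n)∑_{i=1}^n [−⟨β,X_i⟩ + log ∑_{j∈R_i} e^{⟨β,X_j⟩}], λ₂ > 0. Suppose β̂_a β̂_b > 0, |x_{ja} − x_{jb}| ≤ ε for all j ∈ {1,…,n}, and |w_a − w_b| ≤ η. Then |β̂_a − β̂_b| ≤ (1/(2λ₂))(2ε + λ₁ η). -/
/-!
Move mass `t > 0` from the larger coordinate `β̂_a` to the smaller one `β̂_b`. Every linear
predictor `⟨β, X_j⟩` moves by at most `tε`, and log-sum-exp is 1-Lipschitz for the sup norm, so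
the Cox loss rises by at most `2tε`; since `β̂_a, β̂_b` have the same sign and `t ≤ β̂_a - β̂_b`, no
kink of `|·|` is crossed and the weighted `ℓ¹` penalty rises by at most `tη`; the ridge term drops
by `2t(β̂_a - β̂_b) - 2t²`. Minimality gives `2λ₂(β̂_a - β̂_b) t ≤ (2ε + λ₁η) t + 2λ₂t²`, and
`t → 0⁺` yields the bound: a one-sided directional version of the stationarity argument.
-/

open Real Finset Filter Topology

lemma log_sum_exp_le_add {ι : Type*} {s : Finset ι} (hs : s.Nonempty) {f g : ι → ℝ} {c : ℝ}
    (h : ∀ j ∈ s, f j ≤ g j + c) :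
    log (∑ j ∈ s, exp (f j)) ≤ log (∑ j ∈ s, exp (g j)) + c := by
  have hg : 0 < ∑ j ∈ s, exp (g j) := sum_pos (fun j _ => exp_pos _) hs
  have hsum : ∑ j ∈ s, exp (f j) ≤ exp c * ∑ j ∈ s, exp (g j) := by
    rw [mul_sum]
    exact sum_le_sum fun j hj => by rw [← exp_add, exp_le_exp]; linarith [h j hj]
  calc log (∑ j ∈ s, exp (f j)) ≤ log (exp c * ∑ j ∈ s, exp (g j)) :=
        log_le_log (sum_pos (fun j _ => exp_pos _) hs) hsum
    _ = log (∑ j ∈ s, exp (g j)) + c := by rw [log_mul (exp_ne_zero c) hg.ne', log_exp, add_comm]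

lemma nonpos_of_forall_mul_le_mul_sq {c k δ : ℝ} (hδ : 0 < δ)
    (h : ∀ t ∈ Set.Ioc 0 δ, c * t ≤ k * t ^ 2) : c ≤ 0 := by
  have hlim : Tendsto (fun t => k * t) (𝓝[>] 0) (𝓝 0) :=
    ((continuous_const_mul k).tendsto' 0 0 (mul_zero k)).mono_left nhdsWithin_le_nhds
  refine ge_of_tendsto hlim ?_
  filter_upwards [Ioc_mem_nhdsGT hδ] with t ht
  nlinarith [h t ht, ht.1]

lemma mul_abs_sub_add_mul_abs_add_le {x y t : ℝ} (u v : ℝ) (hxy : 0 < x * y) (ht : 0 ≤ t)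
    (htxy : t ≤ x - y) : u * |x - t| + v * |y + t| ≤ u * |x| + v * |y| + t * |u - v| := by
  have hdev : t * (v - u) ≤ t * |u - v| ∧ t * (u - v) ≤ t * |u - v| :=
    ⟨mul_le_mul_of_nonneg_left (by rw [abs_sub_comm]; exact le_abs_self _) ht,
      mul_le_mul_of_nonneg_left (le_abs_self _) ht⟩
  rcases lt_or_gt_of_ne (left_ne_zero_of_mul hxy.ne') with hx | hx
  · have hy : y < 0 := neg_of_mul_pos_right hxy hx.le
    rw [abs_of_neg hx, abs_of_neg hy, abs_of_neg (by linarith), abs_of_neg (by linarith)]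
    linarith
  · have hy : 0 < y := pos_of_mul_pos_right hxy hx.le
    rw [abs_of_pos hx, abs_of_pos hy, abs_of_pos (by linarith), abs_of_pos (by linarith)]
    linarith

namespace EuclideanSpace

variable {ι : Type*} [DecidableEq ι]

noncomputable def transfer (β : EuclideanSpace ℝ ι) (a b : ι) (t : ℝ) : EuclideanSpace ℝ ι :=
  β + t • (single b 1 - single a 1)

variable {β : EuclideanSpace ℝ ι} {a b : ι} {t : ℝ}

lemma transfer_apply_left (hab : a ≠ b) : transfer β a b t a = β a - t := by
  simp [transfer, hab]; ring

lemma transfer_apply_right (hab : a ≠ b) : transfer β a b t b = β b + t := by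
  simp [transfer, hab.symm]

lemma transfer_apply_of_ne {k : ι} (hka : k ≠ a) (hkb : k ≠ b) : transfer β a b t k = β k := by
  simp [transfer, hka, hkb]

variable [Fintype ι]

lemma sum_transfer (hab : a ≠ b) (φ : ι → ℝ → ℝ) :
    ∑ k, φ k (transfer β a b t k) = ∑ k, φ k (β k) +
      ((φ a (β a - t) - φ a (β a)) + (φ b (β b + t) - φ b (β b))) := by
  rw [← sub_eq_iff_eq_add', ← sum_sub_distrib,
    Fintype.sum_eq_add a b hab fun k hk => by rw [transfer_apply_of_ne hk.1 hk.2, sub_self],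
    transfer_apply_left hab, transfer_apply_right hab]

lemma sum_transfer_mul (x : ι → ℝ) :
    ∑ k, transfer β a b t k * x k = ∑ k, β k * x k + t * (x b - x a) := by
  simp [transfer, add_mul, sub_mul, mul_sub, sum_add_distrib, sum_sub_distrib]

lemma norm_transfer_sq (hab : a ≠ b) :
    ‖transfer β a b t‖ ^ 2 = ‖β‖ ^ 2 - 2 * t * (β a - β b) + 2 * t ^ 2 := by
  simp only [norm_sq_eq, Real.norm_eq_abs, sq_abs]
  rw [sum_transfer hab fun _ y => y ^ 2]
  ring

lemma sum_mul_abs_transfer_le (w : ι → ℝ) (hab : a ≠ b) (hβ : 0 < β a * β b) (ht : 0 ≤ t)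
    (htβ : t ≤ β a - β b) :
    ∑ k, w k * |transfer β a b t k| ≤ ∑ k, w k * |β k| + t * |w a - w b| := by
  rw [sum_transfer hab fun k y => w k * |y|]
  linarith [mul_abs_sub_add_mul_abs_add_le (w a) (w b) hβ ht htβ]

end EuclideanSpace

open EuclideanSpace

noncomputable def coxLoss {n : ℕ} {ι : Type*} [Fintype ι] (X : Fin n → ι → ℝ)
    (R : Fin n → Finset (Fin n)) (β : EuclideanSpace ℝ ι) : ℝ :=
  (1 / (n : ℝ)) * ∑ i, (-(∑ k, β k * X i k) + log (∑ j ∈ R i, exp (∑ k, β k * X j k)))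

section Cox

variable {n : ℕ} {ι : Type*} [Fintype ι] (X : Fin n → ι → ℝ) (R : Fin n → Finset (Fin n))

lemma coxLoss_le_add_of_abs_sub_le (hR : ∀ i, (R i).Nonempty) {β β' : EuclideanSpace ℝ ι}
    {c : ℝ} (hc : 0 ≤ c) (h : ∀ j, |∑ k, β' k * X j k - ∑ k, β k * X j k| ≤ c) :
    coxLoss X R β' ≤ coxLoss X R β + 2 * c := by
  have hterm : ∀ i, -(∑ k, β' k * X i k) + log (∑ j ∈ R i, exp (∑ k, β' k * X j k)) ≤
      -(∑ k, β k * X i k) + log (∑ j ∈ R i, exp (∑ k, β k * X j k)) + 2 * c := by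
    intro i
    have hlog := log_sum_exp_le_add (hR i) fun j _ => (sub_le_iff_le_add'.1 (abs_le.1 (h j)).2)
    linarith [(abs_le.1 (h i)).1]
  have hsum := sum_le_sum fun i (_ : i ∈ univ) => hterm i
  have hn : 1 / (n : ℝ) * n ≤ 1 := by
    rcases n.eq_zero_or_pos with rfl | hn
    · simp
    · rw [one_div_mul_cancel (by positivity)]
  unfold coxLoss
  simp only [sum_add_distrib, sum_const, card_univ, Fintype.card_fin, nsmul_eq_mul] at hsum ⊢
  nlinarith [mul_le_mul_of_nonneg_left hsum (by positivity : (0 : ℝ) ≤ 1 / n)]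

lemma coxLoss_transfer_le [DecidableEq ι] (hR : ∀ i, (R i).Nonempty) {β : EuclideanSpace ℝ ι}
    {a b : ι} {t ε : ℝ} (ht : 0 ≤ t) (hε : 0 ≤ ε) (hx : ∀ j, |X j a - X j b| ≤ ε) :
    coxLoss X R (transfer β a b t) ≤ coxLoss X R β + 2 * (t * ε) := by
  refine coxLoss_le_add_of_abs_sub_le X R hR (mul_nonneg ht hε) fun j => ?_
  rw [sum_transfer_mul, add_sub_cancel_left, abs_mul, abs_of_nonneg ht, abs_sub_comm]
  exact mul_le_mul_of_nonneg_left (hx j) ht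

lemma coxLoss_of_eq_zero (X : Fin 0 → ι → ℝ) (R : Fin 0 → Finset (Fin 0))
    (β : EuclideanSpace ℝ ι) : coxLoss X R β = 0 := by
  simp [coxLoss]

end Cox

section Penalized

variable {ι : Type*} [Fintype ι] {lam1 lam2 : ℝ} (w : ι → ℝ)

lemma eq_zero_of_penalty_nonpos (hw : ∀ k, 0 ≤ w k) (hlam1 : 0 ≤ lam1) (hlam2 : 0 < lam2)
    {β : EuclideanSpace ℝ ι} (h : lam1 * ∑ k, w k * |β k| + lam2 * ‖β‖ ^ 2 ≤ 0) : β = 0 := by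
  have hpen : 0 ≤ lam1 * ∑ k, w k * |β k| :=
    mul_nonneg hlam1 (sum_nonneg fun k _ => mul_nonneg (hw k) (abs_nonneg _))
  have : ‖β‖ ^ 2 ≤ 0 := nonpos_of_mul_nonpos_right (by linarith) hlam2
  exact norm_eq_zero.1 (pow_eq_zero_iff two_ne_zero |>.1 (le_antisymm this (sq_nonneg _)))

lemma sub_le_of_forall_penalized_le [DecidableEq ι] (F : EuclideanSpace ℝ ι → ℝ)
    (hlam1 : 0 ≤ lam1) (hlam2 : 0 < lam2) {β : EuclideanSpace ℝ ι}
    (hmin : ∀ β', F β + lam1 * ∑ k, w k * |β k| + lam2 * ‖β‖ ^ 2 ≤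
      F β' + lam1 * ∑ k, w k * |β' k| + lam2 * ‖β'‖ ^ 2)
    {a b : ι} (hab : 0 < β a * β b) {ε η : ℝ} (hε : 0 ≤ ε) (hwab : |w a - w b| ≤ η)
    (hF : ∀ t, 0 ≤ t → F (transfer β a b t) ≤ F β + 2 * (t * ε)) :
    β a - β b ≤ 1 / (2 * lam2) * (2 * ε + lam1 * η) := by
  have hη : 0 ≤ η := (abs_nonneg _).trans hwab
  rcases le_or_gt (β a - β b) 0 with hle | hΔ
  · exact hle.trans (by positivity)
  have hne : a ≠ b := by rintro rfl; simp at hΔ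
  rw [one_div_mul_eq_div, le_div_iff₀ (by positivity), ← sub_nonpos]
  refine nonpos_of_forall_mul_le_mul_sq (k := 2 * lam2) hΔ fun t ⟨ht, htΔ⟩ => ?_
  have hL := hmin (transfer β a b t)
  rw [norm_transfer_sq hne] at hL
  have hpen := mul_le_mul_of_nonneg_left ((sum_mul_abs_transfer_le w hne hab ht.le htΔ).trans
    (add_le_add_right (mul_le_mul_of_nonneg_left hwab ht.le) _)) hlam1
  nlinarith [hF t ht.le]

end Penalized

/-- Quantitative grouping effect for the penalized Cox partial likelihood. -/
theorem stmt_15 {n p : ℕ} (X : Fin n → Fin p → ℝ) (R : Fin n → Finset (Fin n))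
    (hR : ∀ i, (R i).Nonempty) (lam1 lam2 : ℝ) (hlam1 : 0 ≤ lam1) (hlam2 : 0 < lam2)
    (w : Fin p → ℝ) (hw : ∀ k, 0 ≤ w k)
    (F L : EuclideanSpace ℝ (Fin p) → ℝ)
    (hF : ∀ β, F β = (1 / (n : ℝ)) * ∑ i, (-(∑ k, β k * X i k) +
      Real.log (∑ j ∈ R i, Real.exp (∑ k, β k * X j k))))
    (hL : ∀ β, L β = F β + lam1 * ∑ k, w k * |β k| + lam2 * ‖β‖ ^ 2)
    (βhat : EuclideanSpace ℝ (Fin p)) (hmin : ∀ β, L βhat ≤ L β)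
    (a b : Fin p) (hab : βhat a * βhat b > 0)
    (ε η : ℝ) (hx : ∀ j, |X j a - X j b| ≤ ε) (hwab : |w a - w b| ≤ η) :
    |βhat a - βhat b| ≤ (1 / (2 * lam2)) * (2 * ε + lam1 * η) := by
  obtain rfl : F = coxLoss X R := funext hF
  simp only [hL] at hmin
  -- With no samples `F = 0` (as `1 / 0 = 0`), so the minimizer is `0`, against `hab`.
  rcases n.eq_zero_or_pos with rfl | hn
  · have h0 : βhat = 0 :=
      eq_zero_of_penalty_nonpos w hw hlam1 hlam2 (by simpa [coxLoss_of_eq_zero] using hmin 0)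
    simp [h0] at hab
  have hε : 0 ≤ ε := (abs_nonneg _).trans (hx ⟨0, hn⟩)
  rw [abs_sub_le_iff]
  constructor
  · exact sub_le_of_forall_penalized_le w _ hlam1 hlam2 hmin hab hε hwab
      fun t ht => coxLoss_transfer_le X R hR ht hε hx
  · exact sub_le_of_forall_penalized_le w _ hlam1 hlam2 hmin (by rwa [mul_comm]) hε
      (by rwa [abs_sub_comm]) fun t ht => coxLoss_transfer_le X R hR ht hε
        fun j => by rw [abs_sub_comm]; exact hx j
end
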